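/- For each n ≥ 1, define the polynomial E_n(x) by E_n(k) = h_n(1,2,…,k) for all positive integers k (so E_n(k) = S(n+k, k)). Then the coefficient of x in E_n(x) equals B_n / n, where B_n is the n-th Bernoulli number (convention B_1 = 1/2). -/

import Mathlib

open scoped Classical

/-- The Stirling number of the second kind `S(m, k)`: the number of partitions of an
`m`-element set into `k` non-empty blocks. -/
noncomputable def stirling2 (m k : ℕ) : ℕ :=
  Nat.card {P : Finpartition (Finset.univ : Finset (Fin m)) // P.parts.card = k}

/-- The complete homogeneous symmetric polynomial of degree `n` evaluated at
`(1, 2, …, k)`, i.e. `∑_{1 ≤ z₁ ≤ ⋯ ≤ z_n ≤ k} z₁ ⋯ z_n`. -/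
noncomputable def hNat (n k : ℕ) : ℕ :=
  ∑ f ∈ Finset.univ.filter (fun f : Fin n → Fin k => Monotone f), ∏ i, ((f i : ℕ) + 1)

/-!
For fixed `k`, `∑ₙ hₙ(1, …, k) tⁿ = ∏_{j ≤ k} (1 - j t)⁻¹`, whose logarithmic derivative gives
Newton's identity `(n + 1) hₙ₊₁ = ∑_{i ≤ n} p_{i+1} h_{n-i}` with the power sums
`pₘ(k) = 1ᵐ + ⋯ + kᵐ`. Read as an identity of polynomials in `k`, it determines `E_{n+1}`
recursively. By Faulhaber's formula `pₘ` has constant term `0` and linear coefficient `B'ₘ`, while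
`E_j(0)`, the value of `h_j` at no variables, vanishes for `j ≥ 1`; so the coefficient of `x` on
the right-hand side is `B'_{n+1}`, contributed by the term `i = n` alone.
-/

open Finset

lemma hNat_zero_left (k : ℕ) : hNat 0 k = 1 := by
  simp [hNat, Monotone]

lemma hNat_zero_right (n : ℕ) : hNat n 0 = if n = 0 then 1 else 0 := by
  cases n <;> simp [hNat, Monotone]

lemma Fin.monotone_snoc_last {n k : ℕ} {g : Fin n → Fin (k + 1)} (hg : Monotone g) :
    Monotone (Fin.snoc g (Fin.last k) : Fin (n + 1) → Fin (k + 1)) := by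
  intro i j hij
  induction j using Fin.lastCases with
  | last => simpa using Fin.le_last _
  | cast j =>
    induction i using Fin.lastCases with
    | last => exact absurd hij (not_le.2 (Fin.castSucc_lt_last j))
    | cast i => simpa using hg (Fin.castSucc_le_castSucc_iff.1 hij)

lemma sum_monotone_last_eq_last (n k : ℕ) :
    ∑ f ∈ univ.filter
        (fun f : Fin (n + 1) → Fin (k + 1) => Monotone f ∧ f (Fin.last n) = Fin.last k),
      ∏ i, ((f i : ℕ) + 1) = (k + 1) * hNat n (k + 1) := by
  rw [hNat, mul_sum]
  refine sum_nbij' (· ∘ Fin.castSucc) (Fin.snoc · (Fin.last k)) ?_ ?_ ?_ ?_ ?_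
  · simp only [mem_filter, mem_univ, true_and]
    exact fun f hf => hf.1.comp Fin.strictMono_castSucc.monotone
  · simp only [mem_filter, mem_univ, true_and]
    exact fun g hg => ⟨Fin.monotone_snoc_last hg, Fin.snoc_last _ _⟩
  · simp only [mem_filter, mem_univ, true_and]
    intro f hf
    ext i : 1
    induction i using Fin.lastCases <;> simp [hf.2]
  · intro g _
    ext i : 1
    simp
  · simp only [mem_filter, mem_univ, true_and]
    intro f hf
    rw [Fin.prod_univ_castSucc, hf.2, Fin.val_last, mul_comm]
    rfl

lemma sum_monotone_last_ne_last (n k : ℕ) :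
    ∑ f ∈ univ.filter
        (fun f : Fin (n + 1) → Fin (k + 1) => Monotone f ∧ f (Fin.last n) ≠ Fin.last k),
      ∏ i, ((f i : ℕ) + 1) = hNat (n + 1) k := by
  have lt_last : ∀ f : Fin (n + 1) → Fin (k + 1), Monotone f → f (Fin.last n) ≠ Fin.last k →
      ∀ i, (f i : ℕ) < k := fun f hf hne i =>
    lt_of_le_of_lt (hf (Fin.le_last i)) (Fin.lt_last_iff_ne_last.2 hne)
  rw [hNat]
  refine sum_bij'
    (fun f hf i => (f i).castLT (lt_last f (mem_filter.1 hf).2.1 (mem_filter.1 hf).2.2 i))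
    (fun g _ => Fin.castSucc ∘ g) ?_ ?_ ?_ ?_ ?_
  · simp only [mem_filter, mem_univ, true_and]
    exact fun f hf i j hij => hf.1 hij
  · simp only [mem_filter, mem_univ, true_and]
    exact fun g hg => ⟨Fin.strictMono_castSucc.monotone.comp hg, (Fin.castSucc_lt_last _).ne⟩
  · intro f hf; ext i : 1; simp
  · intro g hg; ext i : 1; simp
  · intro f hf; rfl

lemma hNat_succ_succ (n k : ℕ) :
    hNat (n + 1) (k + 1) = hNat (n + 1) k + (k + 1) * hNat n (k + 1) := by
  rw [hNat, ← sum_filter_add_sum_filter_not _ (fun f => f (Fin.last n) = Fin.last k),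
    filter_filter, filter_filter, sum_monotone_last_eq_last, sum_monotone_last_ne_last, add_comm]

noncomputable def powerSum (m k : ℕ) : ℚ := ∑ j ∈ Ico 1 (k + 1), (j : ℚ) ^ m

lemma powerSum_zero_right (m : ℕ) : powerSum m 0 = 0 := by
  simp [powerSum]

lemma powerSum_succ_right (m k : ℕ) : powerSum m (k + 1) = powerSum m k + ((k : ℚ) + 1) ^ m := by
  rw [powerSum, powerSum, sum_Ico_succ_top (by omega)]
  push_cast
  ring

section GeneratingFunction

open PowerSeries

lemma PowerSeries.coeff_succ_mul_one_sub_C_mul_X {R : Type*} [CommRing R] (f : R⟦X⟧) (a : R)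
    (n : ℕ) : coeff (n + 1) (f * (1 - C a * X)) = coeff (n + 1) f - a * coeff n f := by
  rw [mul_sub, mul_one, ← mul_assoc, mul_comm f, map_sub, coeff_succ_mul_X, coeff_C_mul]

noncomputable def hSeries (k : ℕ) : ℚ⟦X⟧ := mk fun n => (hNat n k : ℚ)

noncomputable def powerSumSeries (k : ℕ) : ℚ⟦X⟧ := mk fun m => powerSum (m + 1) k

lemma hSeries_zero : hSeries 0 = 1 := by
  ext (_ | n) <;> simp [hSeries, hNat_zero_right, coeff_one]

lemma hSeries_succ_mul (k : ℕ) : hSeries (k + 1) * (1 - C ((k : ℚ) + 1) * X) = hSeries k := by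
  ext (_ | n)
  · simp [hSeries, hNat_zero_left]
  · rw [coeff_succ_mul_one_sub_C_mul_X]
    simp only [hSeries, coeff_mk, hNat_succ_succ]
    push_cast
    ring

lemma powerSumSeries_zero : powerSumSeries 0 = 0 := by
  ext n
  simp [powerSumSeries, powerSum_zero_right]

lemma powerSumSeries_succ_mul (k : ℕ) :
    powerSumSeries (k + 1) * (1 - C ((k : ℚ) + 1) * X) =
      powerSumSeries k * (1 - C ((k : ℚ) + 1) * X) + C ((k : ℚ) + 1) := by
  ext (_ | n)
  · simp [powerSumSeries, powerSum_succ_right]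
  · rw [(coeff (n + 1)).map_add, coeff_succ_mul_one_sub_C_mul_X, coeff_succ_mul_one_sub_C_mul_X,
      coeff_C, if_neg n.succ_ne_zero]
    simp only [powerSumSeries, coeff_mk, powerSum_succ_right]
    ring

lemma derivative_hSeries (k : ℕ) : d⁄dX ℚ (hSeries k) = powerSumSeries k * hSeries k := by
  induction k with
  | zero => simp [hSeries_zero, powerSumSeries_zero]
  | succ k ih =>
    set u : ℚ⟦X⟧ := 1 - C ((k : ℚ) + 1) * X with hu_def
    have hu : u ≠ 0 := fun h => by simpa [hu_def] using congrArg constantCoeff h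
    have hdu : d⁄dX ℚ u = -C ((k : ℚ) + 1) := by simp [hu_def]
    have key := congrArg (d⁄dX ℚ) (hSeries_succ_mul k)
    rw [Derivation.leibniz, hdu, ih, ← hSeries_succ_mul k, smul_eq_mul, smul_eq_mul] at key
    apply mul_right_cancel₀ hu
    linear_combination key - hSeries (k + 1) * powerSumSeries_succ_mul k

lemma newton_identity (n k : ℕ) :
    ((n : ℚ) + 1) * hNat (n + 1) k = ∑ i ∈ range (n + 1), powerSum (i + 1) k * hNat (n - i) k := by
  have h := congrArg (coeff n) (derivative_hSeries k)
  rw [coeff_derivative, coeff_mul, Nat.sum_antidiagonal_eq_sum_range_succ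
    (fun i j => coeff i (powerSumSeries k) * coeff j (hSeries k))] at h
  simpa [hSeries, powerSumSeries, mul_comm] using h

end GeneratingFunction

section Polynomials

open Polynomial

noncomputable def faulhaber (p : ℕ) : ℚ[X] :=
  ∑ i ∈ range (p + 1), C (bernoulli' i * (p + 1).choose i / (p + 1)) * X ^ (p + 1 - i)

lemma eval_faulhaber (p k : ℕ) : (faulhaber p).eval (k : ℚ) = powerSum p k := by
  rw [powerSum, sum_Ico_pow]
  simp only [faulhaber, eval_finsetSum, eval_mul, eval_C, eval_pow, eval_X]
  refine sum_congr rfl fun i _ => ?_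
  ring

lemma coeff_zero_faulhaber (p : ℕ) : (faulhaber p).coeff 0 = 0 := by
  simp only [faulhaber, finsetSum_coeff, coeff_C_mul, coeff_X_pow]
  exact sum_eq_zero fun i hi => by rw [if_neg (by simp at hi; omega), mul_zero]

lemma coeff_one_faulhaber (p : ℕ) : (faulhaber p).coeff 1 = bernoulli' p := by
  simp only [faulhaber, finsetSum_coeff, coeff_C_mul, coeff_X_pow]
  rw [sum_eq_single_of_mem p (self_mem_range_succ p)
    fun i hi hne => by rw [if_neg (by simp at hi; omega), mul_zero]]
  rw [if_pos (by omega), mul_one, Nat.choose_succ_self_right]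
  push_cast
  field_simp

lemma Polynomial.coeff_one_mul_of_coeff_zero_eq_zero {R : Type*} [Semiring R] {p : R[X]}
    (hp : p.coeff 0 = 0) (q : R[X]) : (p * q).coeff 1 = p.coeff 1 * q.coeff 0 := by
  simp [coeff_mul, Nat.antidiagonal_succ, hp]

lemma Polynomial.eq_of_eval_natCast_eq {R : Type*} [CommRing R] [IsDomain R] [CharZero R]
    {p q : R[X]} (h : ∀ k : ℕ, 0 < k → p.eval (k : R) = q.eval (k : R)) : p = q := by
  refine eq_of_infinite_eval_eq p q <|
    Set.infinite_of_injective_forall_mem (f := fun k : ℕ => ((k + 1 : ℕ) : R)) ?_ fun k => ?_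
  · exact fun a b hab => by simpa using hab
  · exact h (k + 1) k.succ_pos

/-- The paper's `E_n`: Newton's identity solved for `E_{n+1}`. -/
noncomputable def hPoly : ℕ → ℚ[X]
  | 0 => 1
  | n + 1 => ((n : ℚ) + 1)⁻¹ • ∑ i : Fin (n + 1), faulhaber (i + 1) * hPoly (n - i)

lemma eval_hPoly (n k : ℕ) : (hPoly n).eval (k : ℚ) = hNat n k := by
  induction n using Nat.strong_induction_on with
  | _ n ih =>
    cases n with
    | zero => simp [hPoly, hNat_zero_left]
    | succ n =>
      rw [hPoly, eval_smul, eval_finsetSum,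
        Fin.sum_univ_eq_sum_range (fun i => (faulhaber (i + 1) * hPoly (n - i)).eval (k : ℚ)),
        sum_congr rfl fun i hi => by rw [eval_mul, eval_faulhaber, ih _ (by omega)],
        ← newton_identity, smul_eq_mul]
      field_simp

lemma coeff_zero_hPoly (n : ℕ) : (hPoly n).coeff 0 = if n = 0 then 1 else 0 := by
  rw [coeff_zero_eq_eval_zero, ← Nat.cast_zero, eval_hPoly, hNat_zero_right]
  split_ifs <;> simp

lemma coeff_one_hPoly (n : ℕ) : (hPoly (n + 1)).coeff 1 = bernoulli' (n + 1) / (n + 1) := by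
  simp only [hPoly, coeff_smul, finsetSum_coeff, smul_eq_mul,
    coeff_one_mul_of_coeff_zero_eq_zero (coeff_zero_faulhaber _), coeff_one_faulhaber,
    coeff_zero_hPoly]
  rw [sum_eq_single_of_mem (Fin.last n) (mem_univ _) fun i _ hi => by
    rw [if_neg (by have := Fin.val_lt_last hi; omega), mul_zero]]
  simp [div_eq_inv_mul]

end Polynomials

theorem stmt_11 (n : ℕ) (hn : 0 < n) (E : Polynomial ℚ)
    (hval : ∀ k : ℕ, 0 < k → E.eval (k : ℚ) = hNat n k) :
    E.coeff 1 = bernoulli' n / n := by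
  obtain ⟨n, rfl⟩ : ∃ m, n = m + 1 := ⟨n - 1, by omega⟩
  have hE : E = hPoly (n + 1) := Polynomial.eq_of_eval_natCast_eq fun k hk => by
    rw [hval k hk, eval_hPoly]
  rw [hE, coeff_one_hPoly]
  push_cast
  ring
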